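/- arXiv:2602.09700 — 10 statements merged into one kernel-verified Lean document; each statement's English description precedes it below -/
import Mathlib

section
/- Let U and V be the substitutions on the free monoid on {a, b} given by U(a) = ab, U(b) = b and V(a) = a, V(b) = ab, acting componentwise on pairs of words. Let Ū, V̄ be the operators on pairs of words given by Ū(α, β) = (αβ, β) and V̄(α, β) = (α, αβ). Then for any R₁, …, Rₙ ∈ {U, V}, one has (R̄₁ ∘ ⋯ ∘ R̄ₙ)(a, b) = (Rₙ ∘ ⋯ ∘ R₁)(a, b), where R̄ᵢ denotes Ū if Rᵢ = U and V̄ if Rᵢ = V. -/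
/- The letter `a` is encoded by `false` and the letter `b` by `true`. -/

/-- The Nielsen substitution `U : a ↦ ab, b ↦ b`. -/
def Usub (w : List Bool) : List Bool :=
  (w.map (fun c => if c then [true] else [false, true])).flatten

/-- The Nielsen substitution `V : a ↦ a, b ↦ ab`. -/
def Vsub (w : List Bool) : List Bool :=
  (w.map (fun c => if c then [false, true] else [false])).flatten

/-- Exterior renormalization: `Ū(α,β) = (αβ, β)` (when `r = true`) and
`V̄(α,β) = (α, αβ)` (when `r = false`). -/
def outerStep (r : Bool) (p : List Bool × List Bool) : List Bool × List Bool :=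
  if r then (p.1 ++ p.2, p.2) else (p.1, p.1 ++ p.2)

/-- Interior renormalization acting on a pair of words. -/
def innerStep (r : Bool) (p : List Bool × List Bool) : List Bool × List Bool :=
  if r then (Usub p.1, Usub p.2) else (Vsub p.1, Vsub p.2)

/-!
Both substitutions are monoid endomorphisms of the free monoid, and the exterior operators are
built from concatenation alone, so every interior step commutes with every exterior step. On the
initial pair the two kinds of step agree, `R(a, b) = R̄(a, b)`. Hence
`R̄₁ (R̄₂ ⋯ R̄ₙ (a, b)) = R̄₁ (Rₙ ⋯ R₂ (a, b)) = Rₙ ⋯ R₂ (R̄₁ (a, b)) = Rₙ ⋯ R₂ R₁ (a, b)`.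
-/

theorem Usub_append (u v : List Bool) : Usub (u ++ v) = Usub u ++ Usub v := by
  simp [Usub]

theorem Vsub_append (u v : List Bool) : Vsub (u ++ v) = Vsub u ++ Vsub v := by
  simp [Vsub]

theorem outerStep_map_map {f : List Bool → List Bool} (hf : ∀ u v, f (u ++ v) = f u ++ f v)
    (r : Bool) (p : List Bool × List Bool) :
    outerStep r (Prod.map f f p) = Prod.map f f (outerStep r p) := by
  cases r <;> simp [outerStep, hf]

theorem innerStep_outerStep (s r : Bool) (p : List Bool × List Bool) :
    innerStep s (outerStep r p) = outerStep r (innerStep s p) := by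
  cases s
  exacts [(outerStep_map_map Vsub_append r p).symm, (outerStep_map_map Usub_append r p).symm]

theorem innerStep_a_b (r : Bool) : innerStep r ([false], [true]) = outerStep r ([false], [true]) := by
  cases r <;> rfl

/-- `(R̄₁ ∘ ⋯ ∘ R̄ₙ)(a, b) = (Rₙ ∘ ⋯ ∘ R₁)(a, b)` for any choices `Rᵢ ∈ {U, V}`. -/
theorem exterior_eq_interior_renormalization (Rs : List Bool) :
    Rs.foldr outerStep ([false], [true]) =
      Rs.foldl (fun p r => innerStep r p) ([false], [true]) := by
  induction Rs with
  | nil => rfl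
  | cons r Rs ih =>
    rw [List.foldr_cons, ih, List.foldl_cons, innerStep_a_b,
      List.foldl_hom (outerStep r) fun p s => innerStep_outerStep s r p]
end

section
/- For any finite word w over the alphabet {a, b}, one has b·U(wᵀ) = U(w)ᵀ·b and V(wᵀ)·a = a·V(w)ᵀ, where U, V are the substitutions U(a) = ab, U(b) = b, V(a) = a, V(b) = ab and wᵀ denotes the reversal of w. In particular, if w is a palindrome then b·U(w) and V(w)·a are palindromes. -/
/-!
For a substitution `σ`, the identity `x·σ(wᵀ) = σ(w)ᵀ·x` is multiplicative in `w`, so it holds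
for all words as soon as it holds for letters: `x·σ(c) = σ(c)ᵀ·x`. For `U` with `x = b` this is
`b·ab = ba·b` and `b·b = b·b`; for `V` the mirror identity with `x = a` is `a·a = a·a` and
`ab·a = a·ba`. If moreover `x` and `w` are palindromes, the identity says that `x·σ(w)` is one.
-/

namespace List

variable {α β : Type*} {σ : α → List β} {x : List β}

theorem append_flatMap_reverse_of_forall (hσ : ∀ c, x ++ σ c = (σ c).reverse ++ x)
    (w : List α) : x ++ w.reverse.flatMap σ = (w.flatMap σ).reverse ++ x := by
  induction w with
  | nil => simp
  | cons c w ih =>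
    calc x ++ (c :: w).reverse.flatMap σ = (x ++ w.reverse.flatMap σ) ++ σ c := by simp
      _ = (w.flatMap σ).reverse ++ (x ++ σ c) := by rw [ih, append_assoc]
      _ = ((c :: w).flatMap σ).reverse ++ x := by rw [hσ]; simp

theorem flatMap_reverse_append_of_forall (hσ : ∀ c, σ c ++ x = x ++ (σ c).reverse)
    (w : List α) : w.reverse.flatMap σ ++ x = x ++ (w.flatMap σ).reverse := by
  induction w with
  | nil => simp
  | cons c w ih =>
    calc (c :: w).reverse.flatMap σ ++ x = w.reverse.flatMap σ ++ (σ c ++ x) := by simp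
      _ = (x ++ (w.flatMap σ).reverse) ++ (σ c).reverse := by rw [hσ, ← append_assoc, ih]
      _ = x ++ ((c :: w).flatMap σ).reverse := by simp

theorem reverse_append_flatMap_of_forall (hσ : ∀ c, x ++ σ c = (σ c).reverse ++ x)
    (hx : x.reverse = x) {w : List α} (hw : w.reverse = w) :
    (x ++ w.flatMap σ).reverse = x ++ w.flatMap σ := by
  rw [reverse_append, hx, ← append_flatMap_reverse_of_forall hσ, hw]

theorem reverse_flatMap_append_of_forall (hσ : ∀ c, σ c ++ x = x ++ (σ c).reverse)
    (hx : x.reverse = x) {w : List α} (hw : w.reverse = w) :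
    (w.flatMap σ ++ x).reverse = w.flatMap σ ++ x := by
  rw [reverse_append, hx, ← flatMap_reverse_append_of_forall hσ, hw]

end List

/-- `b·U(wᵀ) = U(w)ᵀ·b` and `V(wᵀ)·a = a·V(w)ᵀ`; in particular, if `w` is a palindrome
then `b·U(w)` and `V(w)·a` are palindromes. -/
theorem commutation_identities (w : List Bool) :
    (true :: Usub w.reverse = (Usub w).reverse ++ [true]) ∧
    (Vsub w.reverse ++ [false] = false :: (Vsub w).reverse) ∧
    (w.reverse = w →
      (true :: Usub w).reverse = true :: Usub w ∧
      (Vsub w ++ [false]).reverse = Vsub w ++ [false]) := by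
  have hU : ∀ c : Bool, [true] ++ (if c then [true] else [false, true]) =
      (if c then [true] else [false, true]).reverse ++ [true] := by decide
  have hV : ∀ c : Bool, (if c then [false, true] else [false]) ++ [false] =
      [false] ++ (if c then [false, true] else [false]).reverse := by decide
  exact ⟨List.append_flatMap_reverse_of_forall hU w,
    List.flatMap_reverse_append_of_forall hV w,
    fun hw => ⟨List.reverse_append_flatMap_of_forall hU rfl hw,
      List.reverse_flatMap_append_of_forall hV rfl hw⟩⟩
end

section
/- Every word pair (α, β) obtained from (a, b) by finitely many applications of the operators Ū(α, β) = (αβ, β) and V̄(α, β) = (α, αβ) satisfies: α starts with the letter a and β ends with the letter b, and moreover the identity αβ = β_a α^b holds, where β_a is β with its last letter replaced by a and α^b is α with its first letter replaced by b. -/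
/-- `(α, β)` is obtained from `(a, b)` by finitely many applications of `Ū, V̄`. -/
def ChristoffelPair (p : List Bool × List Bool) : Prop :=
  ∃ Rs : List Bool, Rs.foldr outerStep ([false], [true]) = p

/-! If `αβ = β_a α^b`, then `(αβ)^b = α^b β` gives the identity for `Ū(α, β)`, and
`(αβ)_a = α β_a` gives it for `V̄(α, β)`; it holds for `(a, b)`, hence for every pair in the tree. -/

def SwapIdentity (p : List Bool × List Bool) : Prop :=
  ∃ α' β' : List Bool, p.1 = false :: α' ∧ p.2 = β' ++ [true] ∧
    p.1 ++ p.2 = (β' ++ [false]) ++ (true :: α')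

theorem swapIdentity_initial : SwapIdentity ([false], [true]) :=
  ⟨[], [], rfl, rfl, rfl⟩

theorem swapIdentity_outerStep {p : List Bool × List Bool} (hp : SwapIdentity p) (r : Bool) :
    SwapIdentity (outerStep r p) := by
  obtain ⟨α, β⟩ := p
  obtain ⟨α', β', rfl, rfl, hswap⟩ := hp
  cases r
  · refine ⟨α', false :: α' ++ β', rfl, by simp [outerStep], ?_⟩
    simp only [outerStep, Bool.false_eq_true, if_false]
    rw [List.append_assoc, hswap]
    simp
  · refine ⟨α' ++ β' ++ [true], β', by simp [outerStep], rfl, ?_⟩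
    simp only [outerStep, if_true]
    rw [hswap]
    simp

theorem swapIdentity_foldr_outerStep (Rs : List Bool) :
    SwapIdentity (Rs.foldr outerStep ([false], [true])) := by
  induction Rs with
  | nil => exact swapIdentity_initial
  | cons r Rs ih => exact swapIdentity_outerStep ih r

/-- Every Christoffel pair `(α, β)` satisfies: `α` begins with `a`, `β` ends with `b`,
and `αβ = β_a α^b` where `β_a` replaces the last letter of `β` by `a` and `α^b`
replaces the first letter of `α` by `b`. -/
theorem christoffel_pair_structure (α β : List Bool) (h : ChristoffelPair (α, β)) :
    ∃ α' β' : List Bool, α = false :: α' ∧ β = β' ++ [true] ∧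
      α ++ β = (β' ++ [false]) ++ (true :: α') := by
  obtain ⟨Rs, hRs⟩ := h
  exact (hRs ▸ swapIdentity_foldr_outerStep Rs : SwapIdentity (α, β))
end

section
/- Let (α, β) be any word pair obtained from (a, b) by finitely many applications of Ū(α, β) = (αβ, β) and V̄(α, β) = (α, αβ). Then α^b β = βᵀ α^b and α β_a = β_a αᵀ, where wᵀ is the reversal of w, α^b is α with its first letter changed from a to b, and β_a is β with its last letter changed from b to a. Consequently, for every k ≥ 1 the words α^k β and α β^k start with β_a and end with α^b. -/
open List

theorem List.flatten_replicate_append_eq_of_append_eq {α : Type*} {x y v : List α}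
    (h : x ++ v = v ++ y) (k : ℕ) :
    (replicate k x).flatten ++ v = v ++ (replicate k y).flatten := by
  induction k with
  | zero => simp
  | succ k ih =>
    calc (replicate (k + 1) x).flatten ++ v = x ++ ((replicate k x).flatten ++ v) := by
          simp [replicate_succ]
      _ = (v ++ y) ++ (replicate k y).flatten := by rw [ih, ← append_assoc, h]
      _ = v ++ (replicate (k + 1) y).flatten := by simp [replicate_succ]

/-- For the pair `(a u, v b)`: the symmetries `α^b β = βᵀ α^b` and `α β_a = β_a αᵀ` with the
first letter, resp. the last letter, cancelled. -/
def InteriorSymmetric (u v : List Bool) : Prop :=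
  u ++ v ++ [true] = v.reverse ++ true :: u ∧ false :: u ++ v = v ++ false :: u.reverse

namespace InteriorSymmetric

variable {u v : List Bool}

theorem reverse_left (h : InteriorSymmetric u v) :
    u.reverse ++ true :: v = true :: (v.reverse ++ u.reverse) := by
  simpa using (congrArg reverse h.1).symm

theorem reverse_right (h : InteriorSymmetric u v) :
    v.reverse ++ u.reverse ++ [false] = u ++ false :: v.reverse := by
  simpa using congrArg reverse h.2

theorem outerStep_true (h : InteriorSymmetric u v) : InteriorSymmetric (u ++ v ++ [true]) v := by
  constructor
  · calc u ++ v ++ [true] ++ v ++ [true] = v.reverse ++ true :: u ++ v ++ [true] := by rw [h.1]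
      _ = v.reverse ++ true :: (u ++ v ++ [true]) := by simp
  · calc false :: (u ++ v ++ [true]) ++ v = (false :: u ++ v) ++ true :: v := by simp
      _ = v ++ false :: (u.reverse ++ true :: v) := by rw [h.2]; simp
      _ = v ++ false :: (u ++ v ++ [true]).reverse := by rw [h.reverse_left]; simp

theorem outerStep_false (h : InteriorSymmetric u v) : InteriorSymmetric u (false :: u ++ v) := by
  constructor
  · calc u ++ (false :: u ++ v) ++ [true] = u ++ false :: (u ++ v ++ [true]) := by simp
      _ = (u ++ false :: v.reverse) ++ true :: u := by rw [h.1]; simp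
      _ = (false :: u ++ v).reverse ++ true :: u := by rw [← h.reverse_right]; simp
  · rw [append_assoc, h.2]

theorem flipHead_append_eq (h : InteriorSymmetric u v) :
    (true :: u) ++ (v ++ [true]) = (v ++ [true]).reverse ++ true :: u := by
  simpa using h.1

theorem append_flipLast_eq (h : InteriorSymmetric u v) :
    (false :: u) ++ (v ++ [false]) = (v ++ [false]) ++ (false :: u).reverse := by
  simpa using congrArg (· ++ [false]) h.2

theorem prefix_flatten_replicate_append (h : InteriorSymmetric u v) (j : ℕ) :
    v ++ [false] <+: (replicate (j + 1) (false :: u)).flatten ++ (v ++ [true]) := by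
  have hconj := flatten_replicate_append_eq_of_append_eq h.append_flipLast_eq (j + 1)
  have key : (replicate (j + 1) (false :: u)).flatten ++ v =
      v ++ false :: ((replicate j (false :: u).reverse).flatten ++ u.reverse) := by
    apply append_cancel_right (bs := [false])
    simpa [replicate_succ'] using hconj
  rw [← append_assoc, key]
  simp

theorem suffix_flatten_replicate_append (h : InteriorSymmetric u v) (j : ℕ) :
    true :: u <:+ (replicate (j + 1) (false :: u)).flatten ++ (v ++ [true]) := by
  have key : (replicate (j + 1) (false :: u)).flatten ++ (v ++ [true]) =
      (replicate j (false :: u)).flatten ++ false :: v.reverse ++ true :: u := by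
    simpa [replicate_succ'] using h.1
  rw [key]
  exact suffix_append _ _

theorem prefix_append_flatten_replicate (h : InteriorSymmetric u v) (j : ℕ) :
    v ++ [false] <+: (false :: u) ++ (replicate (j + 1) (v ++ [true])).flatten := by
  have key : (false :: u) ++ (replicate (j + 1) (v ++ [true])).flatten =
      v ++ false :: u.reverse ++ true :: (replicate j (v ++ [true])).flatten := by
    simpa [replicate_succ] using congrArg (· ++ true :: (replicate j (v ++ [true])).flatten) h.2
  rw [key]
  simp

theorem suffix_append_flatten_replicate (h : InteriorSymmetric u v) (j : ℕ) :
    true :: u <:+ (false :: u) ++ (replicate (j + 1) (v ++ [true])).flatten := by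
  have hconj := flatten_replicate_append_eq_of_append_eq h.flipHead_append_eq.symm (j + 1)
  have key : u ++ (replicate (j + 1) (v ++ [true])).flatten =
      v.reverse ++ (replicate j (v ++ [true]).reverse).flatten ++ true :: u := by
    simpa [replicate_succ] using hconj.symm
  rw [cons_append, key]
  exact suffix_cons_iff.mpr (Or.inr (suffix_append _ _))

end InteriorSymmetric

theorem ChristoffelPair.exists_interiorSymmetric {p : List Bool × List Bool}
    (hp : ChristoffelPair p) : ∃ u v, p = (false :: u, v ++ [true]) ∧ InteriorSymmetric u v := by
  obtain ⟨Rs, rfl⟩ := hp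
  induction Rs with
  | nil => exact ⟨[], [], rfl, rfl, rfl⟩
  | cons r Rs ih =>
    obtain ⟨u, v, hp, h⟩ := ih
    rw [foldr_cons, hp]
    cases r
    · exact ⟨u, false :: u ++ v, by simp [outerStep], h.outerStep_false⟩
    · exact ⟨u ++ v ++ [true], v, by simp [outerStep], h.outerStep_true⟩

/-- For every Christoffel pair `(α, β)` (with `α = a·α'`, `β = β'·b`):
`α^b β = βᵀ α^b`, `α β_a = β_a αᵀ`, and for every `k ≥ 1` the words `α^k β` and
`α β^k` start with `β_a` and end with `α^b`. -/
theorem christoffel_symmetry (α β : List Bool) (h : ChristoffelPair (α, β)) :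
    ∃ α' β' : List Bool, α = false :: α' ∧ β = β' ++ [true] ∧
      ((true :: α') ++ β = β.reverse ++ (true :: α')) ∧
      (α ++ (β' ++ [false]) = (β' ++ [false]) ++ α.reverse) ∧
      (∀ k : ℕ, 1 ≤ k →
        ((β' ++ [false]) <+: ((List.replicate k α).flatten ++ β) ∧
          (true :: α') <:+ ((List.replicate k α).flatten ++ β)) ∧
        ((β' ++ [false]) <+: (α ++ (List.replicate k β).flatten) ∧
          (true :: α') <:+ (α ++ (List.replicate k β).flatten))) := by
  obtain ⟨u, v, hp, hsym⟩ := h.exists_interiorSymmetric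
  obtain ⟨rfl, rfl⟩ := Prod.mk.inj hp
  refine ⟨u, v, rfl, rfl, hsym.flipHead_append_eq, hsym.append_flipLast_eq, fun k hk => ?_⟩
  obtain ⟨j, rfl⟩ := Nat.exists_eq_add_of_le' hk
  exact ⟨⟨hsym.prefix_flatten_replicate_append j, hsym.suffix_flatten_replicate_append j⟩,
    hsym.prefix_append_flatten_replicate j, hsym.suffix_append_flatten_replicate j⟩
end

section
/- Let (α, β) be a word pair obtained from (a, b) by finitely many applications of Ū and V̄. Then the right-infinite word α^∞ = ααα… equals β_a·(αᵀ)^∞, and the left-infinite word β^∞ = …βββ equals (βᵀ)^∞·α^b, where β_a replaces the last letter of β by a and α^b replaces the first letter of α by b. -/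
namespace Stream'

variable {α : Type*}

/-- The right-infinite word `w^∞`; the default `d` is only read when `w = []`. -/
def cycleD (w : List α) (d : α) : Stream' α := fun n => w.getD (n % w.length) d

theorem get_cycleD (w : List α) (d : α) (n : ℕ) :
    (cycleD w d).get n = w.getD (n % w.length) d :=
  rfl

theorem get_append_stream_eq_ite (y : List α) (s : Stream' α) (d : α) (n : ℕ) :
    (y ++ₛ s).get n = if n < y.length then y.getD n d else s.get (n - y.length) := by
  split_ifs with hn
  · rw [get_append_left n y s hn, List.getD_eq_getElem _ _ hn]
  · obtain ⟨m, rfl⟩ := Nat.exists_eq_add_of_le (not_lt.1 hn)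
    rw [get_append_right, Nat.add_sub_cancel_left]

theorem append_stream_cycleD (w : List α) (d : α) : w ++ₛ cycleD w d = cycleD w d := by
  ext n
  rw [get_append_stream_eq_ite w _ d]
  split_ifs with hn
  · simp only [get_cycleD, Nat.mod_eq_of_lt hn]
  · obtain ⟨m, rfl⟩ := Nat.exists_eq_add_of_le (not_lt.1 hn)
    simp only [get_cycleD, Nat.add_sub_cancel_left, Nat.add_mod_left]

theorem eq_of_append_stream_eq_self {w : List α} (hw : w ≠ []) {s t : Stream' α}
    (hs : w ++ₛ s = s) (ht : w ++ₛ t = t) : s = t := by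
  ext n
  induction n using Nat.strong_induction_on with
  | _ n ih =>
    rw [← hs, ← ht]
    rcases lt_or_ge n w.length with hn | hn
    · rw [get_append_left n w s hn, get_append_left n w t hn]
    · obtain ⟨m, rfl⟩ := Nat.exists_eq_add_of_le hn
      rw [get_append_right, get_append_right]
      exact ih m (by simpa [Nat.pos_iff_ne_zero] using hw)

theorem cycleD_eq_append_stream_of_append_eq {x y z : List α} (hx : x ≠ []) (d : α)
    (h : x ++ y = y ++ z) : cycleD x d = y ++ₛ cycleD z d :=
  eq_of_append_stream_eq_self hx (append_stream_cycleD x d) <| by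
    rw [← append_append_stream, h, append_append_stream, append_stream_cycleD]

end Stream'

namespace List

open Stream'

variable {α : Type*}

theorem getD_mod_length_eq_ite_of_append_eq {x y z : List α} (hx : x ≠ []) (d : α)
    (h : x ++ y = y ++ z) (n : ℕ) :
    x.getD (n % x.length) d =
      if n < y.length then y.getD n d else z.getD ((n - y.length) % z.length) d := by
  simpa only [get_cycleD, get_append_stream_eq_ite y _ d] using
    congrArg (·.get n) (cycleD_eq_append_stream_of_append_eq hx d h)

end List

structure PalindromeTriple (u v : List Bool) : Prop where
  left : (true :: u).reverse = true :: u
  right : (v ++ [false]).reverse = v ++ [false]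
  middle : (u ++ v).reverse = u ++ v

namespace PalindromeTriple

variable {u v : List Bool}

theorem reverse_append_true (h : PalindromeTriple u v) : u.reverse ++ [true] = true :: u := by
  simpa using h.left

theorem false_cons_reverse (h : PalindromeTriple u v) : false :: v.reverse = v ++ [false] := by
  simpa using h.right

theorem reverse_append_reverse (h : PalindromeTriple u v) : v.reverse ++ u.reverse = u ++ v := by
  simpa using h.middle

theorem outerStep_true (h : PalindromeTriple u v) : PalindromeTriple (u ++ v ++ [true]) v where
  left := by simp [h.reverse_append_reverse]
  right := h.right
  middle := by
    calc (u ++ v ++ [true] ++ v).reverse = v.reverse ++ (true :: (u ++ v)) := by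
          simp [h.reverse_append_reverse]
      _ = (v.reverse ++ (u.reverse ++ [true])) ++ v := by simp [h.reverse_append_true]
      _ = u ++ v ++ [true] ++ v := by rw [← List.append_assoc, h.reverse_append_reverse]

theorem outerStep_false (h : PalindromeTriple u v) : PalindromeTriple u (false :: (u ++ v)) where
  left := h.left
  right := by simp [h.reverse_append_reverse]
  middle := by
    calc (u ++ false :: (u ++ v)).reverse = (u ++ v ++ [false]) ++ u.reverse := by
          simp [h.reverse_append_reverse]
      _ = u ++ (false :: v.reverse) ++ u.reverse := by simp [h.false_cons_reverse]
      _ = u ++ false :: (u ++ v) := by simp [h.reverse_append_reverse]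

theorem fst_conj_reverse (h : PalindromeTriple u v) :
    false :: u ++ (v ++ [false]) = v ++ [false] ++ (false :: u).reverse := by
  calc false :: u ++ (v ++ [false]) = false :: v.reverse ++ u.reverse ++ [false] := by
        simp [h.reverse_append_reverse]
    _ = v ++ [false] ++ (false :: u).reverse := by simp [h.false_cons_reverse]

theorem snd_reverse_conj (h : PalindromeTriple u v) :
    (v ++ [true]).reverse ++ (true :: u).reverse = (true :: u).reverse ++ (v ++ [true]) := by
  calc (v ++ [true]).reverse ++ (true :: u).reverse
        = true :: (v.reverse ++ u.reverse) ++ [true] := by simp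
    _ = true :: (u ++ v) ++ [true] := by rw [h.reverse_append_reverse]
    _ = (true :: u).reverse ++ (v ++ [true]) := by simp [h.left]

end PalindromeTriple

theorem ChristoffelPair.exists_palindromeTriple {p : List Bool × List Bool}
    (h : ChristoffelPair p) : ∃ u v, p = (false :: u, v ++ [true]) ∧ PalindromeTriple u v := by
  obtain ⟨Rs, rfl⟩ := h
  induction Rs with
  | nil => exact ⟨[], [], rfl, rfl, rfl, rfl⟩
  | cons r Rs ih =>
    obtain ⟨u, v, hp, huv⟩ := ih
    rw [List.foldr_cons, hp]
    cases r
    · exact ⟨u, false :: (u ++ v), by simp [outerStep], huv.outerStep_false⟩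
    · exact ⟨u ++ v ++ [true], v, by simp [outerStep], huv.outerStep_true⟩

/-- For a Christoffel pair `(α, β)` (with `α = a·α'`, `β = β'·b`), the right-infinite
word `α^∞` equals `β_a·(αᵀ)^∞`, and the left-infinite word `β^∞ = …βββ` equals
`(βᵀ)^∞·α^b`. -/
theorem christoffel_infinite_identities (α β : List Bool) (h : ChristoffelPair (α, β)) :
    ∃ α' β' : List Bool, α = false :: α' ∧ β = β' ++ [true] ∧
      (∀ n : ℕ, α.getD (n % α.length) false =
        if n < β.length then (β' ++ [false]).getD n false
        else α.reverse.getD ((n - β.length) % α.length) false) ∧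
      (∀ n : ℕ, β.reverse.getD (n % β.length) false =
        if n < α.length then (true :: α').reverse.getD n false
        else β.getD ((n - α.length) % β.length) false) := by
  obtain ⟨u, v, hp, huv⟩ := h.exists_palindromeTriple
  obtain ⟨rfl, rfl⟩ := Prod.mk.inj hp
  refine ⟨u, v, rfl, rfl, fun n => ?_, fun n => ?_⟩
  · simpa only [List.length_reverse, List.length_append, List.length_cons, List.length_nil] using
      List.getD_mod_length_eq_ite_of_append_eq (by simp) false huv.fst_conj_reverse n
  · simpa only [List.length_reverse, List.length_append, List.length_cons, List.length_nil] using
      List.getD_mod_length_eq_ite_of_append_eq (by simp) false huv.snd_reverse_conj n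
end

section
/- Every word pair (α, β) obtained from (a, b) by finitely many applications of Ū(α, β) = (αβ, β) and V̄(α, β) = (α, αβ) satisfies: αβ = aθb for some palindrome θ over {a, b}, and moreover ααββ = aθ'abθ'b for some palindrome θ'. -/
open List

structure PalindromicSplit {T : Type*} (x y : T) (p q : List T) : Prop where
  reverse_cons_eq : (y :: p).reverse = y :: p
  reverse_append_singleton_eq : (q ++ [x]).reverse = q ++ [x]
  reverse_append_eq : (p ++ q).reverse = p ++ q

namespace PalindromicSplit

variable {T : Type*} {x y : T} {p q : List T}

theorem nil : PalindromicSplit x y [] [] :=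
  ⟨rfl, rfl, rfl⟩

theorem cons_append_append_singleton (h : PalindromicSplit x y p q) :
    x :: (p ++ q ++ [y]) = q ++ x :: y :: p := by
  calc x :: (p ++ q ++ [y]) = x :: ((p ++ q).reverse ++ [y]) := by rw [h.reverse_append_eq]
    _ = (q ++ [x]).reverse ++ (y :: p).reverse := by simp
    _ = q ++ x :: y :: p := by rw [h.reverse_append_singleton_eq, h.reverse_cons_eq]; simp

theorem reverse_append_cons (h : PalindromicSplit x y p q) :
    q.reverse ++ y :: p = p ++ q ++ [y] := by
  apply reverse_injective
  calc (q.reverse ++ y :: p).reverse = (y :: p).reverse ++ q := by simp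
    _ = y :: (p ++ q).reverse := by rw [h.reverse_cons_eq, h.reverse_append_eq]; simp
    _ = (p ++ q ++ [y]).reverse := by simp

theorem cons_append (h : PalindromicSplit x y p q) :
    x :: (p ++ q) = q ++ x :: p.reverse := by
  apply reverse_injective
  calc (x :: (p ++ q)).reverse = (p ++ q).reverse ++ [x] := by simp
    _ = p ++ (q ++ [x]).reverse := by rw [h.reverse_append_singleton_eq, h.reverse_append_eq]; simp
    _ = (q ++ x :: p.reverse).reverse := by simp

theorem extend_left (h : PalindromicSplit x y p q) :
    PalindromicSplit x y (p ++ q ++ [y]) q where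
  reverse_cons_eq := by
    calc (y :: (p ++ q ++ [y])).reverse = y :: ((p ++ q).reverse ++ [y]) := by simp
      _ = y :: (p ++ q ++ [y]) := by rw [h.reverse_append_eq]
  reverse_append_singleton_eq := h.reverse_append_singleton_eq
  reverse_append_eq := by
    calc (p ++ q ++ [y] ++ q).reverse = q.reverse ++ y :: p ++ q := by
          rw [reverse_append, ← h.reverse_append_eq]; simp
      _ = p ++ q ++ [y] ++ q := by rw [h.reverse_append_cons]

theorem extend_right (h : PalindromicSplit x y p q) :
    PalindromicSplit x y p (x :: (p ++ q)) where
  reverse_cons_eq := h.reverse_cons_eq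
  reverse_append_singleton_eq := by
    calc (x :: (p ++ q) ++ [x]).reverse = x :: ((p ++ q).reverse ++ [x]) := by simp
      _ = x :: (p ++ q) ++ [x] := by rw [h.reverse_append_eq]; simp
  reverse_append_eq := by
    calc (p ++ x :: (p ++ q)).reverse = p ++ (q ++ x :: p.reverse) := by
          rw [reverse_append, ← h.reverse_append_eq]; simp
      _ = p ++ x :: (p ++ q) := by rw [h.cons_append]

end PalindromicSplit

theorem exists_palindromicSplit_foldr_outerStep (Rs : List Bool) :
    ∃ p q, Rs.foldr outerStep ([false], [true]) = (false :: p, q ++ [true]) ∧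
      PalindromicSplit false true p q := by
  induction Rs with
  | nil => exact ⟨[], [], rfl, .nil⟩
  | cons r Rs ih =>
    obtain ⟨p, q, hfold, h⟩ := ih
    cases r
    · exact ⟨p, false :: (p ++ q), by simp [outerStep, hfold], h.extend_right⟩
    · exact ⟨p ++ q ++ [true], q, by simp [outerStep, hfold], h.extend_left⟩

/-- For every Christoffel pair `(α, β)`: `αβ = aθb` with `θ` a palindrome, and
`ααββ = aθ'abθ'b` with `θ'` a palindrome. -/
theorem christoffel_palindromes (α β : List Bool) (h : ChristoffelPair (α, β)) :
    (∃ θ : List Bool, θ.reverse = θ ∧ α ++ β = [false] ++ θ ++ [true]) ∧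
    (∃ θ' : List Bool, θ'.reverse = θ' ∧
      α ++ α ++ β ++ β = [false] ++ θ' ++ [false, true] ++ θ' ++ [true]) := by
  obtain ⟨Rs, hRs⟩ := h
  obtain ⟨p, q, hfold, hsplit⟩ := exists_palindromicSplit_foldr_outerStep Rs
  obtain ⟨rfl, rfl⟩ := Prod.ext_iff.mp (hRs ▸ hfold)
  refine ⟨⟨p ++ q, hsplit.reverse_append_eq, by simp⟩, p ++ q, hsplit.reverse_append_eq, ?_⟩
  calc false :: p ++ false :: p ++ (q ++ [true]) ++ (q ++ [true])
      = false :: p ++ false :: (p ++ q ++ [true]) ++ q ++ [true] := by simp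
    _ = false :: p ++ (q ++ false :: true :: p) ++ q ++ [true] := by
        rw [hsplit.cons_append_append_singleton]
    _ = [false] ++ (p ++ q) ++ [false, true] ++ (p ++ q) ++ [true] := by simp
end

section
/- Let E and F be right-infinite words over the alphabet {a, b}, where a codes the block 22 and b codes the block 11 of partial quotients. Then [2; 2, E] + [0; 1, 1, F] ≤ 3 if and only if E ⪯ F in lexicographic order (with a < b on blocks interpreted via 2 > 1 entrywise), and [2; 2, E] + [0; 1, 1, F] ≥ 3 if and only if F ⪯ E. Here [c₀; c₁, c₂, …] denotes the value of the infinite continued fraction with the partial quotients obtained by expanding each letter a ↦ 2,2 and b ↦ 1,1. -/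
/- The letter `a` is encoded by `false` and the letter `b` by `true`; the substitution
`χ` sends `a ↦ 2,2` and `b ↦ 1,1`. -/

/-- Value of a finite continued fraction `[a₀; a₁, …, aₙ]` with real entries. -/
noncomputable def cfListVal : List ℝ → ℝ
  | [] => 0
  | [x] => x
  | x :: y :: t => x + 1 / cfListVal (y :: t)

/-- Value of the infinite continued fraction `[s 0; s 1, s 2, …]`,
as the limit of the finite convergents. -/
noncomputable def cfVal (s : ℕ → ℝ) : ℝ :=
  Filter.limUnder Filter.atTop (fun n => cfListVal (((List.range (n + 1)).map s)))

/-- The sequence of partial quotients obtained from a right-infinite word over `{a, b}`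
by the substitution `a ↦ 2,2`, `b ↦ 1,1`. -/
def chiSeq (E : ℕ → Bool) : ℕ → ℝ := fun n => if E (n / 2) then 1 else 2

/-- `[2; 2, E]`. -/
noncomputable def valTwo (E : ℕ → Bool) : ℝ :=
  cfVal (fun n => if n < 2 then 2 else chiSeq E (n - 2))

/-- `[0; 1, 1, F]`. -/
noncomputable def valZero (F : ℕ → Bool) : ℝ :=
  cfVal (fun n => if n = 0 then 0 else if n < 3 then 1 else chiSeq F (n - 3))

/-- The lexicographic order on right-infinite words over `{a, b}` determined by the
convention that a larger value of `[2; 2, ·]` corresponds to a lexicographically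
smaller word (so at the first difference the smaller word carries the letter `b`). -/
def lexLe (E F : ℕ → Bool) : Prop :=
  E = F ∨ ∃ n : ℕ, (∀ m, m < n → E m = F m) ∧ E n = true ∧ F n = false

/-!
For every `x > 0` one has `[0; 1, 1, x] + [2; 2, x] = 3`, so `[2; 2, E] + [0; 1, 1, F] ≤ 3`
exactly when `[2; 2, E] ≤ [2; 2, F]`. With all partial quotients in `[1, 2]` the convergents
converge geometrically, and when two such sequences first differ at an even index, by `1` versus
`2`, the one carrying `2` has the larger value whatever the tails. The first differing letter of
two words starts a block at an even position of `χ`, so `E ↦ [2; 2, E]` is strictly antitone for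
the lexicographic order of `Lex (ℕ → Bool)`, which is linear and is the reverse of `lexLe`.
-/

open Filter Set Topology

section ContinuedFractions

variable {s t : ℕ → ℝ}

noncomputable def cfConvergent (s : ℕ → ℝ) (n : ℕ) : ℝ :=
  cfListVal ((List.range (n + 1)).map s)

theorem cfConvergent_zero (s : ℕ → ℝ) : cfConvergent s 0 = s 0 := by
  simp [cfConvergent, cfListVal]

theorem cfConvergent_succ (s : ℕ → ℝ) (n : ℕ) :
    cfConvergent s (n + 1) = s 0 + 1 / cfConvergent (fun i => s (i + 1)) n := by
  rw [cfConvergent, cfConvergent, List.range_succ_eq_map, List.range_succ_eq_map]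
  simp [Function.comp_def, cfListVal]

theorem cfConvergent_mem_Icc (hs : ∀ n, s n ∈ Icc (1 : ℝ) 2) (n : ℕ) :
    cfConvergent s n ∈ Icc (1 : ℝ) 3 := by
  induction n generalizing s with
  | zero =>
    rw [cfConvergent_zero]
    exact ⟨(hs 0).1, (hs 0).2.trans (by norm_num)⟩
  | succ n ih =>
    obtain ⟨h1, -⟩ := ih fun i => hs (i + 1)
    have hpos : 0 < 1 / cfConvergent (fun i => s (i + 1)) n := one_div_pos.2 (by linarith)
    have hle : 1 / cfConvergent (fun i => s (i + 1)) n ≤ 1 := (div_le_one (by linarith)).2 h1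
    rw [cfConvergent_succ]
    exact ⟨by linarith [(hs 0).1], by linarith [(hs 0).2]⟩

theorem four_thirds_le_cfConvergent_succ (hs : ∀ n, s n ∈ Icc (1 : ℝ) 2) (n : ℕ) :
    4 / 3 ≤ cfConvergent s (n + 1) := by
  obtain ⟨h1, h3⟩ := cfConvergent_mem_Icc (fun i => hs (i + 1)) n
  rw [cfConvergent_succ]
  have : 1 / 3 ≤ 1 / cfConvergent (fun i => s (i + 1)) n :=
    one_div_le_one_div_of_le (by linarith) h3
  linarith [(hs 0).1]

theorem abs_cfConvergent_succ_sub_le (hs : ∀ n, s n ∈ Icc (1 : ℝ) 2) (n : ℕ) :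
    |cfConvergent s (n + 1) - cfConvergent s n| ≤ (3 / 4) ^ n := by
  induction n generalizing s with
  | zero =>
    rw [cfConvergent_succ, cfConvergent_zero, cfConvergent_zero, add_sub_cancel_left, pow_zero,
      abs_of_pos (one_div_pos.2 (by linarith [(hs 1).1]))]
    exact div_le_one_of_le₀ (hs 1).1 (by linarith [(hs 1).1])
  | succ n ih =>
    have hs' : ∀ i, s (i + 1) ∈ Icc (1 : ℝ) 2 := fun i => hs (i + 1)
    set x := cfConvergent (fun i => s (i + 1)) (n + 1)
    set y := cfConvergent (fun i => s (i + 1)) n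
    have hx : 4 / 3 ≤ x := four_thirds_le_cfConvergent_succ hs' n
    have hy : 1 ≤ y := (cfConvergent_mem_Icc hs' n).1
    have hx0 : 0 < x := by linarith
    have hy0 : 0 < y := by linarith
    have hxy : 0 < x * y := by positivity
    -- `x ↦ s 0 + 1 / x` contracts by the factor `1 / (x y) ≤ 3 / 4`
    have hdiff : cfConvergent s (n + 2) - cfConvergent s (n + 1) = (y - x) / (x * y) := by
      rw [cfConvergent_succ s (n + 1), cfConvergent_succ s n]
      change s 0 + 1 / x - (s 0 + 1 / y) = _
      field_simp
      ring
    rw [hdiff, abs_div, abs_of_pos hxy, abs_sub_comm, div_le_iff₀ hxy, pow_succ]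
    calc |x - y| ≤ (3 / 4) ^ n := ih hs'
      _ ≤ (3 / 4) ^ n * (3 / 4) * (x * y) := by
        have : (4 / 3 : ℝ) ≤ x * y := by nlinarith
        nlinarith [pow_pos (by norm_num : (0 : ℝ) < 3 / 4) n]

theorem tendsto_cfConvergent (hs : ∀ n, s n ∈ Icc (1 : ℝ) 2) :
    Tendsto (cfConvergent s) atTop (𝓝 (cfVal s)) := by
  have hc : CauchySeq (cfConvergent s) :=
    cauchySeq_of_le_geometric (3 / 4) 1 (by norm_num) fun n => by
      rw [Real.dist_eq, abs_sub_comm, one_mul]; exact abs_cfConvergent_succ_sub_le hs n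
  obtain ⟨x, hx⟩ := cauchySeq_tendsto_of_complete hc
  have hlim : cfVal s = x := hx.limUnder_eq
  rwa [hlim]

theorem cfVal_mem_Icc (hs : ∀ n, s n ∈ Icc (1 : ℝ) 2) : cfVal s ∈ Icc (1 : ℝ) 3 :=
  isClosed_Icc.mem_of_tendsto (tendsto_cfConvergent hs)
    (Eventually.of_forall (cfConvergent_mem_Icc hs))

theorem cfVal_eq_add_one_div (hs : ∀ n, s (n + 1) ∈ Icc (1 : ℝ) 2) :
    cfVal s = s 0 + 1 / cfVal (fun n => s (n + 1)) := by
  have hne : cfVal (fun n => s (n + 1)) ≠ 0 := by linarith [(cfVal_mem_Icc hs).1]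
  have hlim : Tendsto (fun n => cfConvergent s (n + 1)) atTop
      (𝓝 (s 0 + 1 / cfVal (fun n => s (n + 1)))) := by
    simp only [cfConvergent_succ]
    exact tendsto_const_nhds.add (tendsto_const_nhds.div (tendsto_cfConvergent hs) hne)
  exact ((tendsto_add_atTop_iff_nat 1).1 hlim).limUnder_eq

theorem cfVal_lt_cfVal_of_eq_one_of_eq_two (hs : ∀ n, s n ∈ Icc (1 : ℝ) 2)
    (ht : ∀ n, t n ∈ Icc (1 : ℝ) 2) (k : ℕ) (hst : ∀ m < 2 * k, s m = t m)
    (hsk : s (2 * k) = 1) (htk : t (2 * k) = 2) : cfVal s < cfVal t := by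
  induction k generalizing s t with
  | zero =>
    have hs' := cfVal_mem_Icc fun n => hs (n + 1)
    have ht' := cfVal_mem_Icc fun n => ht (n + 1)
    have hle : 1 / cfVal (fun n => s (n + 1)) ≤ 1 := (div_le_one (by linarith [hs'.1])).2 hs'.1
    have hpos : 0 < 1 / cfVal (fun n => t (n + 1)) := one_div_pos.2 (by linarith [ht'.1])
    rw [cfVal_eq_add_one_div fun n => hs (n + 1), cfVal_eq_add_one_div fun n => ht (n + 1)]
    linarith
  | succ k ih =>
    have hlt : cfVal (fun n => s (n + 1 + 1)) < cfVal (fun n => t (n + 1 + 1)) :=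
      ih (fun n => hs _) (fun n => ht _) (fun m hm => hst (m + 2) (by omega)) hsk htk
    have hs' := cfVal_mem_Icc fun n => hs (n + 1 + 1)
    have ht' := cfVal_mem_Icc fun n => ht (n + 1 + 1)
    rw [cfVal_eq_add_one_div fun n => hs (n + 1), cfVal_eq_add_one_div fun n => ht (n + 1),
      cfVal_eq_add_one_div (s := fun n => s (n + 1)) fun n => hs (n + 1 + 1),
      cfVal_eq_add_one_div (s := fun n => t (n + 1)) fun n => ht (n + 1 + 1),
      hst 0 (by omega), hst 1 (by omega)]
    have h1 := (ht 1).1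
    have hX : 0 < cfVal (fun n => s (n + 1 + 1)) := by linarith [hs'.1]
    have hY : 0 < cfVal (fun n => t (n + 1 + 1)) := by linarith [ht'.1]
    gcongr

theorem cfVal_cons (a : ℝ) (hs : ∀ n, s n ∈ Icc (1 : ℝ) 2) :
    cfVal (Stream'.cons a s) = a + 1 / cfVal s :=
  cfVal_eq_add_one_div (s := Stream'.cons a s) hs

end ContinuedFractions

section Words

theorem forall_cons_mem {α : Type*} {S : Set α} {a : α} {s : Stream' α} (ha : a ∈ S)
    (hs : ∀ n, s n ∈ S) : ∀ n, Stream'.cons a s n ∈ S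
  | 0 => ha
  | n + 1 => hs n

theorem chiSeq_mem_Icc (E : ℕ → Bool) (n : ℕ) : chiSeq E n ∈ Icc (1 : ℝ) 2 := by
  unfold chiSeq; split <;> norm_num

theorem cfVal_chiSeq_strictAnti :
    StrictAnti fun w : Lex (ℕ → Bool) => cfVal (chiSeq (ofLex w)) := by
  rintro v w ⟨i, hvw, hlt⟩
  obtain ⟨hv, hw⟩ := Bool.lt_iff.1 hlt
  refine cfVal_lt_cfVal_of_eq_one_of_eq_two (chiSeq_mem_Icc _) (chiSeq_mem_Icc _) i
    (fun m hm => ?_) ?_ ?_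
  · have hwv : w (m / 2) = v (m / 2) := (hvw (m / 2) (by dsimp only; omega)).symm
    exact congrArg (fun b : Bool => if b then (1 : ℝ) else 2) hwv
  · simp [chiSeq, hw]
  · simp [chiSeq, hv]

theorem valTwo_eq (E : ℕ → Bool) : valTwo E = 2 + 1 / (2 + 1 / cfVal (chiSeq E)) := by
  have hseq : (fun n => if n < 2 then (2 : ℝ) else chiSeq E (n - 2)) =
      Stream'.cons 2 (Stream'.cons 2 (chiSeq E)) := by
    funext n; rcases n with _ | _ | n <;> rfl
  have h2 : (2 : ℝ) ∈ Icc (1 : ℝ) 2 := by norm_num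
  rw [valTwo, hseq, cfVal_cons 2 (forall_cons_mem h2 (chiSeq_mem_Icc E)),
    cfVal_cons 2 (chiSeq_mem_Icc E)]

theorem valZero_eq (F : ℕ → Bool) : valZero F = 1 / (1 + 1 / (1 + 1 / cfVal (chiSeq F))) := by
  have hseq : (fun n => if n = 0 then (0 : ℝ) else if n < 3 then 1 else chiSeq F (n - 3)) =
      Stream'.cons 0 (Stream'.cons 1 (Stream'.cons 1 (chiSeq F))) := by
    funext n; rcases n with _ | _ | _ | n <;> rfl
  have h1 : (1 : ℝ) ∈ Icc (1 : ℝ) 2 := by norm_num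
  rw [valZero, hseq, cfVal_cons 0 (forall_cons_mem h1 (forall_cons_mem h1 (chiSeq_mem_Icc F))),
    cfVal_cons 1 (forall_cons_mem h1 (chiSeq_mem_Icc F)), cfVal_cons 1 (chiSeq_mem_Icc F),
    zero_add]

theorem valZero_eq_three_sub_valTwo (F : ℕ → Bool) : valZero F = 3 - valTwo F := by
  have hX := (cfVal_mem_Icc (chiSeq_mem_Icc F)).1
  rw [valZero_eq, valTwo_eq]
  field_simp
  ring

theorem valTwo_strictAnti : StrictAnti fun w : Lex (ℕ → Bool) => valTwo (ofLex w) := by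
  intro v w hvw
  have hlt := cfVal_chiSeq_strictAnti hvw
  have hv := (cfVal_mem_Icc (chiSeq_mem_Icc (ofLex v))).1
  have hw := (cfVal_mem_Icc (chiSeq_mem_Icc (ofLex w))).1
  simp only [valTwo_eq]
  gcongr

theorem lexLe_iff_toLex_le (E F : ℕ → Bool) : lexLe E F ↔ toLex F ≤ toLex E := by
  rw [le_iff_lt_or_eq, lexLe, or_comm, toLex_inj, eq_comm]
  refine or_congr ⟨?_, ?_⟩ Iff.rfl
  · rintro ⟨n, hEF, hE, hF⟩
    exact ⟨n, fun m hm => (hEF m hm).symm, Bool.lt_iff.2 ⟨hF, hE⟩⟩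
  · rintro ⟨n, hFE, hlt⟩
    exact ⟨n, fun m hm => (hFE m hm).symm, (Bool.lt_iff.1 hlt).2, (Bool.lt_iff.1 hlt).1⟩

theorem valTwo_le_valTwo_iff (E F : ℕ → Bool) : valTwo E ≤ valTwo F ↔ lexLe E F := by
  rw [lexLe_iff_toLex_le]
  exact valTwo_strictAnti.le_iff_ge

end Words

/-- `[2; 2, E] + [0; 1, 1, F] ≤ 3` iff `E ⪯ F`, and `≥ 3` iff `F ⪯ E`. -/
theorem cut_value_lexicographic (E F : ℕ → Bool) :
    (valTwo E + valZero F ≤ 3 ↔ lexLe E F) ∧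
    (3 ≤ valTwo E + valZero F ↔ lexLe F E) := by
  rw [valZero_eq_three_sub_valTwo, ← valTwo_le_valTwo_iff, ← valTwo_le_valTwo_iff]
  constructor <;> constructor <;> intro h <;> linarith
end

section
/- Let (Sₙ)_{n≥1} be a sequence of non-negative integers with S_{n+1} − Sₙ ∈ {0, 1}, S₁ ∈ {0,1}, and satisfying Sₙ + Sₘ ≤ S_{n+m} ≤ Sₙ + Sₘ + 1 for all m, n ≥ 1. Then there exists ξ ∈ [0, 1] such that either Sₙ = ⌊nξ⌋ for all n ≥ 1, or Sₙ = −⌊−nξ⌋ − 1 for all n ≥ 1. -/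
/-!
Superadditivity gives `m S n ≤ S (m n)` and almost-subadditivity gives `S (n m) + 1 ≤ n (S m + 1)`,
hence the strict cross inequality `S n / n < (S m + 1) / m`. So `ξ = sup S n / n` satisfies
`S n ≤ n ξ ≤ S n + 1` for every `n`, and the cross inequality forbids the lower and the upper bound
from both being attained. If the upper bound is never attained, `S n = ⌊n ξ⌋`; otherwise the lower
bound never is, and `S n = ⌈n ξ⌉ - 1 = -⌊-n ξ⌋ - 1`.
-/

theorem Int.neg_floor_neg_sub_one_eq {α : Type*} [Ring α] [LinearOrder α] [IsStrictOrderedRing α]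
    [FloorRing α] {x : α} {z : ℤ} (hlt : (z : α) < x) (hle : x ≤ z + 1) :
    -⌊-x⌋ - 1 = z := by
  have hceil : ⌈x⌉ = z + 1 :=
    Int.ceil_eq_iff.mpr ⟨by push_cast; simpa using hlt, by exact_mod_cast hle⟩
  rw [Int.floor_neg, neg_neg, hceil]
  ring

theorem exists_forall_le_mul_le_add_one (a : ℕ → ℝ)
    (hcross : ∀ m n : ℕ, 1 ≤ m → 1 ≤ n → m * a n ≤ n * (a m + 1))
    (hnonneg : 0 ≤ a 1) (hle : ∀ n : ℕ, 1 ≤ n → a n ≤ n) :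
    ∃ ξ : ℝ, 0 ≤ ξ ∧ ξ ≤ 1 ∧ ∀ n : ℕ, 1 ≤ n → a n ≤ n * ξ ∧ n * ξ ≤ a n + 1 := by
  set A := (fun n : ℕ => a n / n) '' Set.Ici 1
  have hA : A.Nonempty := ⟨_, Set.mem_image_of_mem _ Set.self_mem_Ici⟩
  have hA_le_one : ∀ x ∈ A, x ≤ 1 := by
    rintro _ ⟨n, hn, rfl⟩
    exact div_le_one_of_le₀ (hle n hn) n.cast_nonneg
  have hle_sup : ∀ n : ℕ, 1 ≤ n → a n / n ≤ sSup A :=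
    fun n hn => le_csSup ⟨1, hA_le_one⟩ ⟨n, hn, rfl⟩
  have hsup_le : ∀ m : ℕ, 1 ≤ m → sSup A ≤ (a m + 1) / m := by
    intro m hm
    refine csSup_le hA ?_
    rintro _ ⟨n, hn, rfl⟩
    rw [div_le_div_iff₀ (Nat.cast_pos.mpr hn) (Nat.cast_pos.mpr hm)]
    linarith [hcross m n hm hn]
  refine ⟨sSup A, ?_, csSup_le hA hA_le_one, fun n hn => ⟨?_, ?_⟩⟩
  · exact hnonneg.trans (by simpa using hle_sup 1 le_rfl)
  · rw [mul_comm, ← div_le_iff₀ (Nat.cast_pos.mpr hn)]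
    exact hle_sup n hn
  · rw [mul_comm, ← le_div_iff₀ (Nat.cast_pos.mpr hn)]
    exact hsup_le n hn

section Balanced

variable {S : ℕ → ℕ}

theorem apply_le_self_of_apply_succ_le (hS1 : S 1 ≤ 1)
    (hstep : ∀ n : ℕ, 1 ≤ n → S (n + 1) ≤ S n + 1)
    {n : ℕ} (hn : 1 ≤ n) : S n ≤ n := by
  induction n, hn using Nat.le_induction with
  | base => exact hS1
  | succ k hk ih => linarith [hstep k hk]

theorem mul_le_apply_mul (hsuper : ∀ m n : ℕ, 1 ≤ m → 1 ≤ n → S n + S m ≤ S (n + m))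
    {k n : ℕ} (hk : 1 ≤ k) (hn : 1 ≤ n) : k * S n ≤ S (k * n) := by
  induction k, hk using Nat.le_induction with
  | base => simp
  | succ k hk ih =>
    rw [add_mul, one_mul, add_mul, one_mul]
    linarith [hsuper n (k * n) hn (Nat.mul_pos hk hn)]

theorem apply_mul_add_one_le (hsub : ∀ m n : ℕ, 1 ≤ m → 1 ≤ n → S (n + m) ≤ S n + S m + 1)
    {k n : ℕ} (hk : 1 ≤ k) (hn : 1 ≤ n) : S (k * n) + 1 ≤ k * (S n + 1) := by
  induction k, hk using Nat.le_induction with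
  | base => simp
  | succ k hk ih =>
    rw [add_mul, one_mul, add_mul, one_mul]
    linarith [hsub n (k * n) hn (Nat.mul_pos hk hn)]

theorem mul_apply_lt_mul_apply_add_one (hsub : ∀ m n : ℕ, 1 ≤ m → 1 ≤ n →
      S n + S m ≤ S (n + m) ∧ S (n + m) ≤ S n + S m + 1)
    {m n : ℕ} (hm : 1 ≤ m) (hn : 1 ≤ n) : m * S n < n * (S m + 1) :=
  calc m * S n ≤ S (m * n) := mul_le_apply_mul (fun m n hm hn => (hsub m n hm hn).1) hm hn
    _ = S (n * m) := by rw [mul_comm]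
    _ < n * (S m + 1) := apply_mul_add_one_le (fun m n hm hn => (hsub m n hm hn).2) hn hm

end Balanced

theorem balanced_counting_is_mechanical_general (S : ℕ → ℕ)
    (hstep : ∀ n : ℕ, 1 ≤ n → S (n + 1) = S n ∨ S (n + 1) = S n + 1)
    (hsub : ∀ m n : ℕ, 1 ≤ m → 1 ≤ n →
      S n + S m ≤ S (n + m) ∧ S (n + m) ≤ S n + S m + 1) :
    ∃ ξ : ℝ, 0 ≤ ξ ∧ ξ ≤ 1 ∧
      ((∀ n : ℕ, 1 ≤ n → (S n : ℤ) = ⌊(n : ℝ) * ξ⌋) ∨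
       (∀ n : ℕ, 1 ≤ n → (S n : ℤ) = -⌊-((n : ℝ) * ξ)⌋ - 1)) := by
  have hstep' : ∀ n : ℕ, 1 ≤ n → S (n + 1) ≤ S n + 1 := fun n hn => by
    rcases hstep n hn with h | h <;> omega
  -- `2 S 1 ≤ S 2 ≤ S 1 + 1`
  have hS1 : S 1 ≤ 1 := by linarith [(hsub 1 1 le_rfl le_rfl).1, hstep' 1 le_rfl]
  have hcross (m n : ℕ) (hm : 1 ≤ m) (hn : 1 ≤ n) : (m : ℝ) * S n < n * (S m + 1) := by
    exact_mod_cast mul_apply_lt_mul_apply_add_one hsub hm hn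
  obtain ⟨ξ, hξ0, hξ1, hξ⟩ := exists_forall_le_mul_le_add_one (fun n => (S n : ℝ))
    (fun m n hm hn => (hcross m n hm hn).le) (Nat.cast_nonneg _)
    (fun n hn => by exact_mod_cast apply_le_self_of_apply_succ_le hS1 hstep' hn)
  refine ⟨ξ, hξ0, hξ1, ?_⟩
  by_cases htop : ∃ m : ℕ, 1 ≤ m ∧ (m : ℝ) * ξ = S m + 1
  · obtain ⟨m, hm, hmξ⟩ := htop
    refine .inr fun n hn => (Int.neg_floor_neg_sub_one_eq ?_ (by simpa using (hξ n hn).2)).symm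
    refine (by simpa using (hξ n hn).1 : (S n : ℝ) ≤ n * ξ).lt_of_ne fun hnξ => ?_
    have := hcross m n hm hn
    rw [hnξ, ← hmξ] at this
    linarith
  · push Not at htop
    refine .inl fun n hn => (Int.floor_eq_iff.mpr ⟨?_, ?_⟩).symm
    · exact_mod_cast (hξ n hn).1
    · exact_mod_cast (hξ n hn).2.lt_of_ne (htop n hn)

/-- If `(Sₙ)` is a `{0,1}`-step sequence with `S₁ ∈ {0,1}` satisfying
`Sₙ + Sₘ ≤ S_{n+m} ≤ Sₙ + Sₘ + 1` for all `m, n ≥ 1`, then there is `ξ ∈ [0,1]`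
such that either `Sₙ = ⌊nξ⌋` for all `n ≥ 1`, or `Sₙ = −⌊−nξ⌋ − 1` for all `n ≥ 1`. -/
theorem balanced_counting_is_mechanical (S : ℕ → ℕ)
    (hstep : ∀ n : ℕ, 1 ≤ n → S (n + 1) = S n ∨ S (n + 1) = S n + 1)
    (hS1 : S 1 = 0 ∨ S 1 = 1)
    (hsub : ∀ m n : ℕ, 1 ≤ m → 1 ≤ n →
      S n + S m ≤ S (n + m) ∧ S (n + m) ≤ S n + S m + 1) :
    ∃ ξ : ℝ, 0 ≤ ξ ∧ ξ ≤ 1 ∧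
      ((∀ n : ℕ, 1 ≤ n → (S n : ℤ) = ⌊(n : ℝ) * ξ⌋) ∨
       (∀ n : ℕ, 1 ≤ n → (S n : ℤ) = -⌊-((n : ℝ) * ξ)⌋ - 1)) :=
  balanced_counting_is_mechanical_general S hstep hsub
end

section
/- Let w = w₁…w_k be a Christoffel word over {a, b} (i.e., w = αβ for a pair (α, β) obtained from (a, b) by finitely many applications of Ū(α,β) = (αβ, β), V̄(α,β) = (α, αβ)), indices taken cyclically. Then for every position j with w_j w_{j+1} = ba, there exists r ≥ 1 such that the word w_{j−1}…w_{j−r+1} equals w_{j+2}…w_{j+r}, w_{j−r} = a, and w_{j+r+1} = b; that is, every occurrence of ba in w extends (cyclically) to a factor of the form a θᵀ b a θ b. -/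
/-- The bi-infinite periodic word `w^∞`, indexed by `ℤ`. -/
def cyc (w : List Bool) : ℤ → Bool := fun n => w.getD (n % (w.length : ℤ)).toNat false

section Occurrences

variable {α : Type*} {f : ℤ → α}

def OccursAt (f : ℤ → α) (x : List α) (p : ℤ) : Prop :=
  ∀ i (hi : i < x.length), f (p + i) = x[i]

def OccursBackAt (f : ℤ → α) (x : List α) (q : ℤ) : Prop :=
  OccursAt (f ∘ Neg.neg) x (-q)

theorem occursBackAt_iff {x : List α} {q : ℤ} :
    OccursBackAt f x q ↔ ∀ i (hi : i < x.length), f (q - i) = x[i] := by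
  simp [OccursBackAt, OccursAt, neg_add_eq_sub]

theorem occursAt_nil (p : ℤ) : OccursAt f [] p := fun _ hi => absurd hi (Nat.not_lt_zero _)

theorem occursAt_append {x y : List α} {p : ℤ} :
    OccursAt f (x ++ y) p ↔ OccursAt f x p ∧ OccursAt f y (p + x.length) := by
  constructor
  · intro h
    refine ⟨fun i hi => ?_, fun i hi => ?_⟩
    · rw [h i (by rw [List.length_append]; omega), List.getElem_append_left hi]
    · have := h (x.length + i) (by rw [List.length_append]; omega)
      simpa [add_assoc] using this
  · rintro ⟨hx, hy⟩ i hi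
    by_cases hix : i < x.length
    · simpa [List.getElem_append_left hix] using hx i hix
    · obtain ⟨k, rfl⟩ : ∃ k, i = x.length + k := ⟨i - x.length, by omega⟩
      simpa [add_assoc] using hy k (by rw [List.length_append] at hi; omega)

theorem occursAt_singleton {c : α} {p : ℤ} : OccursAt f [c] p ↔ f p = c := by
  simp [OccursAt]

theorem occursAt_cons {c : α} {x : List α} {p : ℤ} :
    OccursAt f (c :: x) p ↔ f p = c ∧ OccursAt f x (p + 1) := by
  rw [← List.singleton_append, occursAt_append, occursAt_singleton, List.length_singleton,
    Nat.cast_one]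

theorem occursBackAt_nil (q : ℤ) : OccursBackAt f [] q := occursAt_nil _

theorem occursBackAt_append {x y : List α} {q : ℤ} :
    OccursBackAt f (x ++ y) q ↔ OccursBackAt f x q ∧ OccursBackAt f y (q - x.length) := by
  simp only [OccursBackAt, occursAt_append, neg_sub, neg_add_eq_sub]

theorem occursBackAt_cons {c : α} {x : List α} {q : ℤ} :
    OccursBackAt f (c :: x) q ↔ f q = c ∧ OccursBackAt f x (q - 1) := by
  simp only [OccursBackAt, occursAt_cons, Function.comp, neg_neg, neg_sub, neg_add_eq_sub]

theorem OccursAt.occursBackAt_reverse {x : List α} {p : ℤ} (h : OccursAt f x p) :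
    OccursBackAt f x.reverse (p + x.length - 1) := by
  rw [occursBackAt_iff]
  intro i hi
  rw [List.length_reverse] at hi
  rw [List.getElem_reverse, ← h _ (by omega)]
  congr 1
  omega

end Occurrences

/-- `F` is the concatenation of the blocks `φ (f m)`, the block of `m` starting at `σ m`. -/
structure IsSubstImage {α β : Type*} (φ : α → List β) (f : ℤ → α) (F : ℤ → β)
    (σ : ℤ → ℤ) : Prop where
  pos_succ : ∀ m, σ (m + 1) = σ m + (φ (f m)).length
  occursAt : ∀ m, OccursAt F (φ (f m)) (σ m)
  exists_eq_pos_add : ∀ j, ∃ m, ∃ k < (φ (f m)).length, j = σ m + k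

namespace IsSubstImage

variable {α β : Type*} {φ : α → List β} {f : ℤ → α} {F : ℤ → β} {σ : ℤ → ℤ}

theorem occursAt_flatMap (h : IsSubstImage φ f F σ) {x : List α} {p : ℤ}
    (hx : OccursAt f x p) : OccursAt F (x.flatMap φ) (σ p) := by
  induction x generalizing p with
  | nil => exact occursAt_nil _
  | cons c x ih =>
    obtain ⟨rfl, hx'⟩ := occursAt_cons.mp hx
    rw [List.flatMap_cons, occursAt_append, ← h.pos_succ]
    exact ⟨h.occursAt p, ih hx'⟩

theorem occursBackAt_flatMap (h : IsSubstImage φ f F σ) {x : List α} {q : ℤ}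
    (hx : OccursBackAt f x q) :
    OccursBackAt F (x.flatMap (List.reverse ∘ φ)) (σ (q + 1) - 1) := by
  induction x generalizing q with
  | nil => exact occursBackAt_nil _
  | cons c x ih =>
    obtain ⟨rfl, hx'⟩ := occursBackAt_cons.mp hx
    rw [List.flatMap_cons, occursBackAt_append, Function.comp_apply, List.length_reverse]
    refine ⟨h.pos_succ q ▸ (h.occursAt q).occursBackAt_reverse, ?_⟩
    have := ih hx'
    rwa [sub_add_cancel, ← add_sub_cancel_right (σ q) (φ (f q)).length, ← h.pos_succ,
      sub_right_comm] at this

theorem exists_boundary (h : IsSubstImage φ f F σ) {x y : β}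
    (hφ : ∀ c i (hi : i + 1 < (φ c).length), (φ c)[i] = x → (φ c)[i + 1] ≠ y)
    {j : ℤ} (hj : F j = x) (hj1 : F (j + 1) = y) : ∃ m, j + 1 = σ (m + 1) := by
  obtain ⟨m, k, hk, rfl⟩ := h.exists_eq_pos_add j
  refine ⟨m, ?_⟩
  by_cases hk1 : k + 1 < (φ (f m)).length
  · refine absurd ?_ (hφ (f m) k hk1 (hj ▸ (h.occursAt m k hk).symm))
    rw [← h.occursAt m (k + 1) hk1, ← hj1, Nat.cast_succ, add_assoc]
  · rw [h.pos_succ]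
    omega

end IsSubstImage

theorem List.exists_of_lt_length_flatMap {α β : Type*} {φ : α → List β} :
    ∀ {l : List α} {p : ℕ}, p < (l.flatMap φ).length →
      ∃ s, ∃ hs : s < l.length, ∃ k < (φ l[s]).length, p = ((l.take s).flatMap φ).length + k
  | [], _, hp => absurd hp (Nat.not_lt_zero _)
  | c :: l, p, hp => by
    by_cases hpc : p < (φ c).length
    · exact ⟨0, by simp, p, hpc, by simp⟩
    · rw [List.flatMap_cons, List.length_append] at hp
      obtain ⟨s, hs, k, hk, hsk⟩ :=
        exists_of_lt_length_flatMap (φ := φ) (l := l) (p := p - (φ c).length) (by omega)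
      refine ⟨s + 1, by simpa using hs, k, by simpa using hk, ?_⟩
      simp only [List.take_succ_cons, List.flatMap_cons, List.length_append]
      omega

theorem List.flatMap_append_singleton_eq_cons {α β : Type*} {g h : α → List β} {d : β}
    (hgh : ∀ c, g c ++ [d] = d :: h c) (l : List α) :
    l.flatMap g ++ [d] = d :: l.flatMap h := by
  induction l with
  | nil => rfl
  | cons c l ih => rw [List.flatMap_cons, List.append_assoc, ih, ← List.singleton_append,
      ← List.append_assoc, hgh, List.flatMap_cons, List.cons_append]

theorem exists_eq_mul_add {n : ℕ} (hn : 0 < n) (j : ℤ) : ∃ q : ℤ, ∃ i < n, j = q * n + i := by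
  have h₀ := Int.emod_nonneg j (Int.natCast_pos.mpr hn).ne'
  have h₁ := Int.emod_lt_of_pos j (Int.natCast_pos.mpr hn)
  have h₂ := Int.mul_ediv_add_emod j n
  exact ⟨j / n, (j % n).toNat, by omega, by rw [Int.toNat_of_nonneg h₀, mul_comm]; omega⟩

/-- Where the block of the `m`-th letter of `v^∞` starts in `(v.flatMap φ)^∞`. -/
def flatMapPos {α β : Type*} (φ : α → List β) (v : List α) (m : ℤ) : ℤ :=
  m / v.length * (v.flatMap φ).length + ((v.take (m % v.length).toNat).flatMap φ).length

section FlatMapPos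

variable {α β : Type*} {φ : α → List β} {v : List α}

theorem flatMapPos_mul_add_of_lt (q : ℤ) {s : ℕ} (hs : s < v.length) :
    flatMapPos φ v (q * v.length + s)
      = q * (v.flatMap φ).length + ((v.take s).flatMap φ).length := by
  have hn : (v.length : ℤ) ≠ 0 := by omega
  have hdiv : (q * v.length + s) / v.length = q := by
    rw [add_comm, Int.add_mul_ediv_right _ _ hn, Int.ediv_eq_zero_of_lt (by omega) (by omega),
      zero_add]
  have hmod : (q * v.length + s) % v.length = s := by
    rw [add_comm, Int.add_mul_emod_self_right, Int.emod_eq_of_lt (by omega) (by omega)]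
  rw [flatMapPos, hdiv, hmod, Int.toNat_natCast]

theorem flatMapPos_mul_add (q : ℤ) {s : ℕ} (hs : s ≤ v.length) :
    flatMapPos φ v (q * v.length + s)
      = q * (v.flatMap φ).length + ((v.take s).flatMap φ).length := by
  rcases hs.lt_or_eq with hs | rfl
  · exact flatMapPos_mul_add_of_lt q hs
  rcases eq_or_ne v [] with rfl | hv
  · simp [flatMapPos]
  have := flatMapPos_mul_add_of_lt (φ := φ) (q + 1) (List.length_pos_iff.mpr hv)
  rw [List.take_length]
  simp only [Nat.cast_zero, add_zero, List.take_zero, List.flatMap_nil, List.length_nil] at this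
  rwa [add_one_mul, add_one_mul] at this

end FlatMapPos

theorem cyc_mul_add (w : List Bool) (q : ℤ) {i : ℕ} (hi : i < w.length) :
    cyc w (q * w.length + i) = w[i] := by
  rw [cyc, add_comm, Int.add_mul_emod_self_right, Int.emod_eq_of_lt (by omega) (by omega),
    Int.toNat_natCast, List.getD_eq_getElem _ _ hi]

theorem occursAt_cyc (w : List Bool) (q : ℤ) : OccursAt (cyc w) w (q * w.length) :=
  fun _ hi => cyc_mul_add w q hi

theorem isSubstImage_cyc_flatMap {φ : Bool → List Bool} {v : List Bool}
    (hW : v.flatMap φ ≠ []) :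
    IsSubstImage φ (cyc v) (cyc (v.flatMap φ)) (flatMapPos φ v) := by
  have hn : 0 < v.length := List.length_pos_iff.mpr (by rintro rfl; exact hW rfl)
  refine ⟨fun m => ?_, fun m => ?_, fun j => ?_⟩
  · obtain ⟨q, s, hs, rfl⟩ := exists_eq_mul_add hn m
    rw [add_assoc, ← Nat.cast_succ, flatMapPos_mul_add q hs, flatMapPos_mul_add q hs.le,
      cyc_mul_add v q hs, List.take_succ_eq_append_getElem hs, List.flatMap_append,
      List.length_append, List.flatMap_singleton]
    push_cast
    ring
  · obtain ⟨q, s, hs, rfl⟩ := exists_eq_mul_add hn m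
    have hsplit : v.flatMap φ
        = (v.take s).flatMap φ ++ (φ v[s] ++ (v.drop (s + 1)).flatMap φ) := by
      rw [← List.flatMap_cons, List.getElem_cons_drop, ← List.flatMap_append,
        List.take_append_drop]
    have hocc := occursAt_cyc (v.flatMap φ) q
    rw [hsplit, occursAt_append, occursAt_append, ← hsplit] at hocc
    rw [cyc_mul_add v q hs, flatMapPos_mul_add q hs.le]
    exact hocc.2.1
  · obtain ⟨q, p, hp, rfl⟩ := exists_eq_mul_add (List.length_pos_iff.mpr hW) j
    obtain ⟨s, hs, k, hk, rfl⟩ := List.exists_of_lt_length_flatMap hp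
    refine ⟨q * v.length + s, k, by rwa [cyc_mul_add v q hs], ?_⟩
    rw [flatMapPos_mul_add q hs.le]
    push_cast
    ring

def outerSubst : Bool → Bool → List Bool
  | true, false => [false, true]
  | true, true => [true]
  | false, false => [false]
  | false, true => [false, true]

theorem outerSubst_ne_nil (r c : Bool) : outerSubst r c ≠ [] := by
  cases r <;> cases c <;> simp [outerSubst]

theorem outerSubst_getElem_succ_ne_false (r c : Bool) (i : ℕ)
    (hi : i + 1 < (outerSubst r c).length) :
    (outerSubst r c)[i] = true → (outerSubst r c)[i + 1] ≠ false := by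
  cases r <;> cases c <;> simp [outerSubst] at hi ⊢

theorem exists_flatMap_outerSubst (r : Bool) (θ : List Bool) :
    ∃ θ', (false :: θ ++ [true]).flatMap (outerSubst r) = false :: θ' ++ [true] ∧
      (true :: θ ++ [false]).flatMap (List.reverse ∘ outerSubst r) = true :: θ' ++ [false] := by
  cases r
  · refine ⟨θ.flatMap (outerSubst false) ++ [false], by simp [outerSubst], ?_⟩
    have := List.flatMap_append_singleton_eq_cons (g := outerSubst false)
      (h := List.reverse ∘ outerSubst false) (d := false) (by decide) θ
    simp [outerSubst, this]
  · refine ⟨true :: θ.flatMap (outerSubst true), by simp [outerSubst], ?_⟩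
    have := List.flatMap_append_singleton_eq_cons (g := List.reverse ∘ outerSubst true)
      (h := outerSubst true) (d := true) (by decide) θ
    simp [outerSubst, ← this]

theorem outerSubst_boundary {F : ℤ → Bool} {j : ℤ} (r c d : Bool)
    (hc : OccursBackAt F (outerSubst r c).reverse j) (hd : OccursAt F (outerSubst r d) (j + 1))
    (hj : F j = true) (hj1 : F (j + 1) = false) :
    (c = true ∧ d = false) ∨
      (OccursBackAt F [true, false] j ∧ OccursAt F [false, true] (j + 1)) := by
  cases r <;> cases c <;> cases d <;>
    simp_all [outerSubst, occursAt_cons, occursBackAt_cons, occursAt_nil, occursBackAt_nil]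

/-- Around every factor `ba` there is a factor `a θᵀ b a θ b`, stored as `b θ a` read leftwards
from the `b` and `a θ b` read rightwards from the `a`. -/
def EveryBAExtends (f : ℤ → Bool) : Prop :=
  ∀ j, f j = true → f (j + 1) = false → ∃ θ : List Bool,
    OccursBackAt f (true :: θ ++ [false]) j ∧ OccursAt f (false :: θ ++ [true]) (j + 1)

theorem EveryBAExtends.of_isSubstImage {f F : ℤ → Bool} {σ : ℤ → ℤ} {r : Bool}
    (hf : EveryBAExtends f) (h : IsSubstImage (outerSubst r) f F σ) : EveryBAExtends F := by
  intro j hj hj1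
  obtain ⟨m, hm⟩ := h.exists_boundary (outerSubst_getElem_succ_ne_false r) hj hj1
  have hjm : j = σ (m + 1) - 1 := by omega
  have hc : OccursBackAt F (outerSubst r (f m)).reverse j := by
    simpa [hjm] using
      h.occursBackAt_flatMap (x := [f m]) (occursBackAt_cons.mpr ⟨rfl, occursBackAt_nil _⟩)
  have hd : OccursAt F (outerSubst r (f (m + 1))) (j + 1) := by
    simpa [hm] using h.occursAt_flatMap (x := [f (m + 1)]) (occursAt_singleton.mpr rfl)
  rcases outerSubst_boundary r _ _ hc hd hj hj1 with ⟨hfm, hfm1⟩ | hab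
  · obtain ⟨θ, hl, hr⟩ := hf m hfm hfm1
    obtain ⟨θ', hθr, hθl⟩ := exists_flatMap_outerSubst r θ
    refine ⟨θ', ?_, ?_⟩
    · rw [hjm, ← hθl]
      exact h.occursBackAt_flatMap hl
    · rw [hm, ← hθr]
      exact h.occursAt_flatMap hr
  · exact ⟨[], hab⟩

theorem everyBAExtends_cyc_false : EveryBAExtends (cyc [false]) := by
  intro j hj
  simp [cyc] at hj

theorem EveryBAExtends.cyc_flatMap_outerSubst {v : List Bool} (hv : EveryBAExtends (cyc v))
    (hne : v ≠ []) (r : Bool) : EveryBAExtends (cyc (v.flatMap (outerSubst r))) :=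
  hv.of_isSubstImage <| isSubstImage_cyc_flatMap fun hW =>
    let ⟨c, hc⟩ := List.exists_mem_of_ne_nil v hne
    outerSubst_ne_nil r c (List.flatMap_eq_nil_iff.mp hW c hc)

theorem EveryBAExtends.exists_mirror {f : ℤ → Bool} (hf : EveryBAExtends f) {j : ℤ}
    (hj : f j = true) (hj1 : f (j + 1) = false) :
    ∃ r : ℕ, 1 ≤ r ∧ (∀ i : ℕ, 1 ≤ i → i < r → f (j - i) = f (j + 1 + i)) ∧
      f (j - r) = false ∧ f (j + 1 + r) = true := by
  obtain ⟨θ, hl, hr⟩ := hf j hj hj1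
  rw [occursBackAt_iff] at hl
  refine ⟨θ.length + 1, by omega, fun i hi hir => ?_, by simpa using hl (θ.length + 1) (by simp),
    by simpa using hr (θ.length + 1) (by simp)⟩
  obtain ⟨k, rfl⟩ : ∃ k, i = k + 1 := ⟨i - 1, by omega⟩
  have hk : k < θ.length := by omega
  rw [hl (k + 1) (by simp only [List.cons_append, List.length_cons, List.length_append]; omega),
    hr (k + 1) (by simp only [List.cons_append, List.length_cons, List.length_append]; omega)]
  simp [List.getElem_append_left hk]

theorem outerStep_map_flatMap (r : Bool) (φ : Bool → List Bool) (p : List Bool × List Bool) :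
    outerStep r (p.map (·.flatMap φ) (·.flatMap φ))
      = (outerStep r p).map (·.flatMap φ) (·.flatMap φ) := by
  cases r <;> simp [outerStep, List.flatMap_append]

theorem foldr_outerStep_map_flatMap (Rs : List Bool) (φ : Bool → List Bool)
    (p : List Bool × List Bool) :
    Rs.foldr outerStep (p.map (·.flatMap φ) (·.flatMap φ))
      = (Rs.foldr outerStep p).map (·.flatMap φ) (·.flatMap φ) := by
  induction Rs with
  | nil => rfl
  | cons r Rs ih => rw [List.foldr_cons, List.foldr_cons, ih, outerStep_map_flatMap]

theorem foldr_outerStep_fst_ne_nil (Rs : List Bool) :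
    (Rs.foldr outerStep ([false], [true])).1 ≠ [] := by
  induction Rs with
  | nil => simp
  | cons r Rs ih => cases r <;> simp [outerStep, ih]

theorem everyBAExtends_cyc_of_christoffelPair {α β : List Bool} (h : ChristoffelPair (α, β)) :
    EveryBAExtends (cyc (α ++ β)) := by
  obtain ⟨Rs, hRs⟩ := h
  induction Rs using List.reverseRecOn generalizing α β with
  | nil =>
    obtain ⟨rfl, rfl⟩ := Prod.mk.inj hRs.symm
    exact everyBAExtends_cyc_false.cyc_flatMap_outerSubst (List.cons_ne_nil _ _) true
  | append_singleton Rs r ih =>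
    have hbase : outerStep r ([false], [true])
        = ([false], [true]).map (·.flatMap (outerSubst r)) (·.flatMap (outerSubst r)) := by
      cases r <;> rfl
    rw [List.foldr_append, List.foldr_cons, List.foldr_nil, hbase,
      foldr_outerStep_map_flatMap] at hRs
    obtain ⟨rfl, rfl⟩ := Prod.mk.inj hRs.symm
    rw [← List.flatMap_append]
    exact EveryBAExtends.cyc_flatMap_outerSubst (ih Prod.mk.eta.symm)
      (by simp [foldr_outerStep_fst_ne_nil]) r

/-- In a Christoffel word `w = αβ`, read cyclically, every occurrence of `ba` extends
to a factor of the form `a θᵀ b a θ b`: if `w_j w_{j+1} = ba` then there is `r ≥ 1`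
with `w_{j−i} = w_{j+1+i}` for `1 ≤ i ≤ r−1`, `w_{j−r} = a` and `w_{j+r+1} = b`. -/
theorem christoffel_ba_factor (α β : List Bool) (h : ChristoffelPair (α, β)) :
    ∀ j : ℤ, cyc (α ++ β) j = true → cyc (α ++ β) (j + 1) = false →
      ∃ r : ℕ, 1 ≤ r ∧
        (∀ i : ℕ, 1 ≤ i → i < r → cyc (α ++ β) (j - i) = cyc (α ++ β) (j + 1 + i)) ∧
        cyc (α ++ β) (j - r) = false ∧ cyc (α ++ β) (j + 1 + r) = true :=
  fun _ hj hj1 => (everyBAExtends_cyc_of_christoffelPair h).exists_mirror hj hj1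
end

section
/- Let μ, ν be coprime positive integers, and define rᵢ = ⌊iμ/ν⌋ − ⌊(i−1)μ/ν⌋ for 1 ≤ i ≤ ν. Then the word w = a b^{r₁} a b^{r₂} ⋯ a b^{r_ν} over {a, b} satisfies |w|_a = ν and |w|_b = μ, and w is a lower Christoffel word (i.e., w = ab, or w = αβ for some pair (α, β) in the tree generated from (a, b) by Ū and V̄, or w equals a or b in degenerate cases). -/
/-!
Write `w_f(n) = ∏_{i<n} a b^{f(i+1) - f(i)}`, so that the mechanical word is
`w_{μ,ν} = w_f(ν)` with `f(i) = ⌊iμ/ν⌋`.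
Since `U (a bʳ) = a bʳ⁺¹` and `V (a bʳ) = a (ab)ʳ`, one checks on floors that
`U (w_{μ,ν}) = w_{μ+ν,ν}` and `V (w_{μ,κ}) = w_{μ,μ+κ}`. On the other hand, applying the
morphism `U` (resp. `V`) to both components of a Christoffel pair yields the pair obtained by one
more `Ū` (resp. `V̄`) applied first, because both morphisms commute with concatenation. The
subtractive Euclidean algorithm on the coprime pair `(μ, ν)` then descends to `(1, 1)`, where the
mechanical word is `ab`.
-/

def morphismU (w : List Bool) : List Bool :=
  w.flatMap fun x => if x then [true] else [false, true]

def morphismV (w : List Bool) : List Bool :=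
  w.flatMap fun x => if x then [false, true] else [false]

section ChristoffelPair

variable {φ : List Bool → List Bool} (hφ : ∀ u v, φ (u ++ v) = φ u ++ φ v)
include hφ

lemma outerStep_map (r : Bool) (p : List Bool × List Bool) :
    outerStep r (Prod.map φ φ p) = Prod.map φ φ (outerStep r p) := by
  cases r <;> simp [outerStep, hφ]

lemma foldr_outerStep_map (Rs : List Bool) (p : List Bool × List Bool) :
    Rs.foldr outerStep (Prod.map φ φ p) = Prod.map φ φ (Rs.foldr outerStep p) := by
  induction Rs with
  | nil => rfl
  | cons r Rs ih => rw [List.foldr_cons, List.foldr_cons, ih, outerStep_map hφ]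

lemma ChristoffelPair.map {r : Bool}
    (hr : Prod.map φ φ ([false], [true]) = outerStep r ([false], [true]))
    {p : List Bool × List Bool} (hp : ChristoffelPair p) : ChristoffelPair (Prod.map φ φ p) := by
  obtain ⟨Rs, rfl⟩ := hp
  exact ⟨Rs ++ [r], by rw [List.foldr_append, List.foldr_cons, List.foldr_nil, ← hr,
    foldr_outerStep_map hφ]⟩

end ChristoffelPair

lemma exists_christoffelPair_morphismU {w : List Bool}
    (hw : ∃ p, ChristoffelPair p ∧ w = p.1 ++ p.2) :
    ∃ p, ChristoffelPair p ∧ morphismU w = p.1 ++ p.2 := by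
  obtain ⟨p, hp, rfl⟩ := hw
  exact ⟨_, hp.map (fun _ _ => List.flatMap_append ..) (r := true) rfl, List.flatMap_append ..⟩

lemma exists_christoffelPair_morphismV {w : List Bool}
    (hw : ∃ p, ChristoffelPair p ∧ w = p.1 ++ p.2) :
    ∃ p, ChristoffelPair p ∧ morphismV w = p.1 ++ p.2 := by
  obtain ⟨p, hp, rfl⟩ := hw
  exact ⟨_, hp.map (fun _ _ => List.flatMap_append ..) (r := false) rfl, List.flatMap_append ..⟩

def blockWord (f : ℕ → ℕ) (n : ℕ) : List Bool :=
  ((List.range n).map fun i => false :: List.replicate (f (i + 1) - f i) true).flatten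

section blockWord

variable {f : ℕ → ℕ}

lemma blockWord_zero : blockWord f 0 = [] := rfl

lemma blockWord_succ (n : ℕ) :
    blockWord f (n + 1) = blockWord f n ++ false :: List.replicate (f (n + 1) - f n) true := by
  simp [blockWord, List.range_succ]

lemma count_false_blockWord (n : ℕ) : (blockWord f n).count false = n := by
  induction n with
  | zero => rfl
  | succ n ih => simp [blockWord_succ, ih, List.count_replicate]

lemma count_true_blockWord (hf : Monotone f) (n : ℕ) :
    (blockWord f n).count true = f n - f 0 := by
  induction n with
  | zero => simp [blockWord_zero]
  | succ n ih =>
    have : f 0 ≤ f n := hf n.zero_le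
    have : f n ≤ f (n + 1) := hf n.le_succ
    simp [blockWord_succ, ih]
    omega

lemma blockWord_add_of_step_one {m k : ℕ} (hf : ∀ j < k, f (m + j + 1) = f (m + j) + 1) :
    blockWord f (m + k) = blockWord f m ++ (List.replicate k [false, true]).flatten := by
  induction k with
  | zero => simp
  | succ k ih =>
    rw [← Nat.add_assoc, blockWord_succ, ih fun j hj => hf j (by omega), hf k k.lt_succ_self,
      List.replicate_succ', List.flatten_append]
    simp

lemma morphismU_blockWord (hf : Monotone f) (n : ℕ) :
    morphismU (blockWord f n) = blockWord (fun i => f i + i) n := by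
  induction n with
  | zero => rfl
  | succ n ih =>
    have : f n ≤ f (n + 1) := hf n.le_succ
    rw [blockWord_succ, blockWord_succ, ← ih, morphismU, List.flatMap_append, ← morphismU,
      show f (n + 1) + (n + 1) - (f n + n) = f (n + 1) - f n + 1 by omega]
    simp [List.flatMap_replicate, List.replicate_succ]

/-- In `V (blockWord g n)`, for `g i ≤ m ≤ g (i + 1)`, exactly `m` letters `b` precede the letter
`a` number `i + 1 + m`; `hh` asks the same of `blockWord h`. -/
lemma morphismV_blockWord {g h : ℕ → ℕ} (hg : Monotone g) (hg0 : g 0 = 0) (hh0 : h 0 = 0)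
    (hh : ∀ i m, g i ≤ m → m ≤ g (i + 1) → h (i + 1 + m) = m) (n : ℕ) :
    morphismV (blockWord g n) = blockWord h (n + g n) := by
  have hdiag : ∀ i, h (i + g i) = g i := by
    rintro (_ | i)
    · simp [hg0, hh0]
    · exact hh i _ (hg (Nat.le_succ i)) le_rfl
  induction n with
  | zero => simp [hg0, blockWord_zero, morphismV]
  | succ n ih =>
    have hmono : g n ≤ g (n + 1) := hg n.le_succ
    have hlen : n + 1 + g (n + 1) = n + g n + 1 + (g (n + 1) - g n) := by omega
    have hstep : ∀ j < g (n + 1) - g n, h (n + g n + 1 + j + 1) = h (n + g n + 1 + j) + 1 := by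
      intro j hj
      rw [show n + g n + 1 + j + 1 = n + 1 + (g n + j + 1) by omega,
        show n + g n + 1 + j = n + 1 + (g n + j) by omega,
        hh n _ (by omega) (by omega), hh n _ (by omega) (by omega)]
    rw [hlen, blockWord_add_of_step_one hstep, blockWord_succ (f := h), blockWord_succ (f := g),
      morphismV, List.flatMap_append, ← morphismV, ih, Nat.add_right_comm, hh n _ le_rfl hmono,
      hdiag, Nat.sub_self]
    simp [List.flatMap_replicate]

end blockWord

lemma add_mul_div_add_eq {t m μ κ : ℕ} (h₁ : m * κ ≤ t * μ) (h₂ : t * μ < (m + 1) * κ + μ) :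
    (t + m) * μ / (μ + κ) = m :=
  Nat.div_eq_of_lt_le (by linarith) (by linarith)

lemma monotone_mul_div (μ ν : ℕ) : Monotone fun i => i * μ / ν :=
  fun _ _ hij => Nat.div_le_div_right (Nat.mul_le_mul_right _ hij)

lemma morphismU_mechanical {μ ν : ℕ} (hν : 0 < ν) :
    morphismU (blockWord (fun i => i * μ / ν) ν) = blockWord (fun i => i * (μ + ν) / ν) ν := by
  rw [morphismU_blockWord (monotone_mul_div μ ν)]
  congr 1
  funext i
  rw [Nat.mul_add, Nat.add_mul_div_right _ _ hν]

lemma morphismV_mechanical {μ κ : ℕ} (hκ : 0 < κ) :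
    morphismV (blockWord (fun i => i * μ / κ) κ) =
      blockWord (fun i => i * μ / (μ + κ)) (μ + κ) := by
  rw [morphismV_blockWord (h := fun i => i * μ / (μ + κ)) (monotone_mul_div μ κ) (by simp)
    (by simp), Nat.mul_div_cancel_left _ hκ, Nat.add_comm κ μ]
  intro i m hlo hhi
  have hlo' := (Nat.div_lt_iff_lt_mul hκ).1 (Nat.lt_succ_of_le hlo)
  have hhi' := (Nat.le_div_iff_mul_le hκ).1 hhi
  exact add_mul_div_add_eq hhi' (by linarith)

theorem exists_christoffelPair_mechanical (μ ν : ℕ) (hμ : 0 < μ) (hν : 0 < ν)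
    (hcop : Nat.Coprime μ ν) :
    ∃ p, ChristoffelPair p ∧ blockWord (fun i => i * μ / ν) ν = p.1 ++ p.2 := by
  rcases lt_trichotomy μ ν with hlt | rfl | hgt
  · obtain ⟨κ, rfl⟩ := Nat.exists_eq_add_of_lt hlt
    rw [Nat.add_assoc, ← morphismV_mechanical (by omega)]
    exact exists_christoffelPair_morphismV <| exists_christoffelPair_mechanical μ (κ + 1) hμ
      (by omega) (Nat.coprime_self_add_right.1 (Nat.add_assoc μ κ 1 ▸ hcop))
  · obtain rfl := (Nat.coprime_self μ).1 hcop
    exact ⟨([false], [true]), ⟨[], rfl⟩, rfl⟩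
  · obtain ⟨κ, rfl⟩ := Nat.exists_eq_add_of_lt hgt
    rw [show ν + κ + 1 = (κ + 1) + ν by omega, ← morphismU_mechanical hν]
    exact exists_christoffelPair_morphismU <| exists_christoffelPair_mechanical (κ + 1) ν
      (by omega) hν (Nat.coprime_add_self_left.1 (by rwa [show κ + 1 + ν = ν + κ + 1 by omega]))
termination_by μ + ν

/-- For coprime `μ, ν ≥ 1`, with `rᵢ = ⌊iμ/ν⌋ − ⌊(i−1)μ/ν⌋`, the word
`w = a b^{r₁} a b^{r₂} ⋯ a b^{r_ν}` has `ν` letters `a`, `μ` letters `b`, and is a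
lower Christoffel word. -/
theorem christoffel_word_from_mechanical (μ ν : ℕ) (hμ : 0 < μ) (hν : 0 < ν)
    (hcop : Nat.Coprime μ ν) :
    ((List.range ν).map
        (fun i => false :: List.replicate ((i + 1) * μ / ν - i * μ / ν) true)).flatten.count
        false = ν ∧
    ((List.range ν).map
        (fun i => false :: List.replicate ((i + 1) * μ / ν - i * μ / ν) true)).flatten.count
        true = μ ∧
    (((List.range ν).map
        (fun i => false :: List.replicate ((i + 1) * μ / ν - i * μ / ν) true)).flatten
        = [false, true] ∨
     (∃ p : List Bool × List Bool, ChristoffelPair p ∧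
        ((List.range ν).map
          (fun i => false :: List.replicate ((i + 1) * μ / ν - i * μ / ν) true)).flatten
          = p.1 ++ p.2) ∨
     ((List.range ν).map
        (fun i => false :: List.replicate ((i + 1) * μ / ν - i * μ / ν) true)).flatten
        = [false] ∨
     ((List.range ν).map
        (fun i => false :: List.replicate ((i + 1) * μ / ν - i * μ / ν) true)).flatten
        = [true]) := by
  have hcount_true : (blockWord (fun i => i * μ / ν) ν).count true = μ := by
    rw [count_true_blockWord (monotone_mul_div μ ν), Nat.mul_div_cancel_left _ hν]
    simp
  exact ⟨count_false_blockWord (f := fun i => i * μ / ν) ν, hcount_true,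
    Or.inr (Or.inl (exists_christoffelPair_mechanical μ ν hμ hν hcop))⟩
end
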